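/- arXiv:2405.03934 — 6 statements merged into one kernel-verified Lean document; each statement's English description precedes it below -/
import Mathlib

section
/- For each n ≥ 1 and each choice of zig-zag, horizontal knitting gives a bijection between n-tuples of positive rationals and closed Y-frieze patterns of width n whose nonzero rows consist of positive rationals. -/
/-- A closed Y-frieze pattern of width `n`: a staggered array `b i j` (row `k`
consists of entries `b i (i+k+2)`) satisfying the Y-diamond rule, with zeroth
row and `(n+1)`-th row of `0`s, a row of `-1`s below, nonzero intermediate
rows, and normalized to `0` outside the pattern. -/
structure ClosedYFrieze (n : ℕ) where
  b : ℤ → ℤ → ℚ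
  diamond : ∀ i j : ℤ, 3 ≤ j - i → j - i ≤ (n : ℤ) + 3 →
    b i j * b (i + 1) (j + 1) = (1 + b (i + 1) j) * (1 + b i (j + 1))
  topZero : ∀ i : ℤ, b i (i + 2) = 0
  botZero : ∀ i : ℤ, b i (i + (n : ℤ) + 3) = 0
  negRow : ∀ i : ℤ, b i (i + (n : ℤ) + 4) = -1
  rowsNonzero : ∀ k : ℕ, 1 ≤ k → k ≤ n → ∃ i : ℤ, b i (i + (k : ℤ) + 2) ≠ 0
  outside : ∀ i j : ℤ, j - i ≤ 1 ∨ (n : ℤ) + 5 ≤ j - i → b i j = 0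

/-- All entries of the nonzero rows are positive rationals. -/
def ClosedYFrieze.Positive {n : ℕ} (P : ClosedYFrieze n) : Prop :=
  ∀ (i : ℤ) (k : ℕ), 1 ≤ k → k ≤ n → 0 < P.b i (i + (k : ℤ) + 2)

/-- All entries of the nonzero rows are positive integers. -/
def ClosedYFrieze.Arithmetic {n : ℕ} (P : ClosedYFrieze n) : Prop :=
  ∀ (i : ℤ) (k : ℕ), 1 ≤ k → k ≤ n → ∃ m : ℕ, 0 < m ∧ P.b i (i + (k : ℤ) + 2) = (m : ℚ)

namespace YF

/-- position of the zig-zag in row `m` (rows numbered `1..n`). -/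
def pz (z : ℕ → ℤ) (m : ℤ) : ℤ := z (m - 1).toNat

section
variable (n : ℕ) (z : ℕ → ℤ)

lemma z_le (hz : ∀ k : ℕ, k + 1 < n → z (k + 1) = z k ∨ z (k + 1) = z k - 1) :
    ∀ k : ℕ, k < n → z 0 - (k : ℤ) ≤ z k ∧ z k ≤ z 0 := by
  intro k
  induction k with
  | zero => simp
  | succ k ih =>
    intro hk
    have h := hz k hk
    have h2 := ih (by omega)
    push_cast
    push_cast at h2
    omega

lemma pz_bound (hz : ∀ k : ℕ, k + 1 < n → z (k + 1) = z k ∨ z (k + 1) = z k - 1)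
    {m : ℤ} (h1 : 1 ≤ m) (h2 : m ≤ (n : ℤ)) :
    z 0 - (n : ℤ) + 1 ≤ pz z m ∧ pz z m ≤ z 0 := by
  have h := z_le n z hz (m - 1).toNat (by omega)
  unfold pz
  omega

lemma pz_step (hz : ∀ k : ℕ, k + 1 < n → z (k + 1) = z k ∨ z (k + 1) = z k - 1)
    {m : ℤ} (h1 : 1 ≤ m) (h2 : m + 1 ≤ (n : ℤ)) :
    pz z (m + 1) = pz z m ∨ pz z (m + 1) = pz z m - 1 := by
  have h := hz (m - 1).toNat (by omega)
  have e1 : (m + 1 - 1).toNat = (m - 1).toNat + 1 := by omega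
  unfold pz
  rw [e1]
  exact h

/-- Termination measure for horizontal knitting. -/
def meas (m i : ℤ) : ℕ :=
  if 1 ≤ m ∧ m ≤ (n : ℤ) then
    (4 * n + 4) * (i - pz z m).natAbs +
      (if pz z m ≤ i then (m + 2 * pz z m - 2 * z 0 + 2 * (n : ℤ)).toNat
       else ((n : ℤ) + 2 * z 0 + 1 - m - 2 * pz z m).toNat)
  else 0

end

lemma helper_eq {C a a' f f' : ℕ} (h1 : a' = a) (h2 : f' < f) :
    C * a' + f' < C * a + f := by subst h1; exact Nat.add_lt_add_left h2 _

lemma helper_step {C a a' f f' : ℕ} (h1 : a' + 1 = a) (h2 : f' < C + f) :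
    C * a' + f' < C * a + f := by
  subst h1; rw [Nat.mul_add, Nat.mul_one]; linarith

lemma helper_pos {C a f : ℕ} (h : 1 ≤ f) : 0 < C * a + f :=
  lt_of_lt_of_le h (Nat.le_add_left _ _)

section
variable {n : ℕ} {z : ℕ → ℤ}
variable (hz : ∀ k : ℕ, k + 1 < n → z (k + 1) = z k ∨ z (k + 1) = z k - 1)
include hz


lemma meas_pos {m i : ℤ} (h1 : 1 ≤ m) (h2 : m ≤ (n : ℤ)) : 0 < meas n z m i := by
  have hb := pz_bound n z hz h1 h2
  unfold meas
  rw [if_pos (show 1 ≤ m ∧ m ≤ (n : ℤ) from ⟨h1, h2⟩)]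
  split_ifs <;> exact helper_pos (by omega)

lemma measE1 {m i : ℤ} (h1 : 1 ≤ m) (h2 : m ≤ (n : ℤ)) (he : pz z m < i) :
    meas n z m (i - 1) < meas n z m i := by
  have hb := pz_bound n z hz h1 h2
  unfold meas
  rw [if_pos (show 1 ≤ m ∧ m ≤ (n : ℤ) from ⟨h1, h2⟩),
    if_pos (show pz z m ≤ i - 1 by omega),
    if_pos (show 1 ≤ m ∧ m ≤ (n : ℤ) from ⟨h1, h2⟩),
    if_pos (show pz z m ≤ i by omega)]
  exact helper_step (by omega) (by omega)

lemma measE2 {m i : ℤ} (h1 : 1 ≤ m) (h2 : m ≤ (n : ℤ)) (he : pz z m < i) :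
    meas n z (m - 1) i < meas n z m i := by
  have hb := pz_bound n z hz h1 h2
  by_cases hm : 1 ≤ m - 1
  · have hb' := pz_bound n z hz hm (by omega)
    have hstep := pz_step n z hz hm (by omega)
    rw [show m - 1 + 1 = m from by ring] at hstep
    unfold meas
    rw [if_pos (show 1 ≤ m - 1 ∧ m - 1 ≤ (n : ℤ) from ⟨hm, by omega⟩),
      if_pos (show pz z (m - 1) ≤ i by omega),
      if_pos (show 1 ≤ m ∧ m ≤ (n : ℤ) from ⟨h1, h2⟩),
      if_pos (show pz z m ≤ i by omega)]
    rcases hstep with h | h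
    · exact helper_eq (by omega) (by omega)
    · exact helper_step (by omega) (by omega)
  · unfold meas
    rw [if_neg (show ¬ (1 ≤ m - 1 ∧ m - 1 ≤ (n : ℤ)) by omega),
      if_pos (show 1 ≤ m ∧ m ≤ (n : ℤ) from ⟨h1, h2⟩),
      if_pos (show pz z m ≤ i by omega)]
    exact helper_pos (by omega)

lemma measE3 {m i : ℤ} (h1 : 1 ≤ m) (h2 : m ≤ (n : ℤ)) (he : pz z m < i) :
    meas n z (m + 1) (i - 1) < meas n z m i := by
  have hb := pz_bound n z hz h1 h2
  by_cases hm : m + 1 ≤ (n : ℤ)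
  · have hb' := pz_bound n z hz (by omega : (1:ℤ) ≤ m + 1) hm
    have hstep := pz_step n z hz h1 hm
    unfold meas
    rw [if_pos (show 1 ≤ m + 1 ∧ m + 1 ≤ (n : ℤ) from ⟨by omega, hm⟩),
      if_pos (show pz z (m + 1) ≤ i - 1 by omega),
      if_pos (show 1 ≤ m ∧ m ≤ (n : ℤ) from ⟨h1, h2⟩),
      if_pos (show pz z m ≤ i by omega)]
    rcases hstep with h | h
    · exact helper_step (by omega) (by omega)
    · exact helper_eq (by omega) (by omega)
  · unfold meas
    rw [if_neg (show ¬ (1 ≤ m + 1 ∧ m + 1 ≤ (n : ℤ)) by omega),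
      if_pos (show 1 ≤ m ∧ m ≤ (n : ℤ) from ⟨h1, h2⟩),
      if_pos (show pz z m ≤ i by omega)]
    exact helper_pos (by omega)

lemma measW1 {m i : ℤ} (h1 : 1 ≤ m) (h2 : m ≤ (n : ℤ)) (hw : i < pz z m) :
    meas n z m (i + 1) < meas n z m i := by
  have hb := pz_bound n z hz h1 h2
  unfold meas
  rw [if_pos (show 1 ≤ m ∧ m ≤ (n : ℤ) from ⟨h1, h2⟩),
    if_pos (show 1 ≤ m ∧ m ≤ (n : ℤ) from ⟨h1, h2⟩),
    if_neg (show ¬ pz z m ≤ i by omega)]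
  by_cases hc : pz z m ≤ i + 1
  · rw [if_pos hc]
    exact helper_step (by omega) (by omega)
  · rw [if_neg hc]
    exact helper_step (by omega) (by omega)

lemma measW2 {m i : ℤ} (h1 : 1 ≤ m) (h2 : m ≤ (n : ℤ)) (hw : i < pz z m) :
    meas n z (m - 1) (i + 1) < meas n z m i := by
  have hb := pz_bound n z hz h1 h2
  by_cases hm : 1 ≤ m - 1
  · have hb' := pz_bound n z hz hm (by omega)
    have hstep := pz_step n z hz hm (by omega)
    rw [show m - 1 + 1 = m from by ring] at hstep
    unfold meas
    rw [if_pos (show 1 ≤ m - 1 ∧ m - 1 ≤ (n : ℤ) from ⟨hm, by omega⟩),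
      if_pos (show 1 ≤ m ∧ m ≤ (n : ℤ) from ⟨h1, h2⟩),
      if_neg (show ¬ pz z m ≤ i by omega)]
    rcases hstep with h | h
    · by_cases hc : pz z (m - 1) ≤ i + 1
      · rw [if_pos hc]
        exact helper_step (by omega) (by omega)
      · rw [if_neg hc]
        exact helper_step (by omega) (by omega)
    · rw [if_neg (show ¬ pz z (m - 1) ≤ i + 1 by omega)]
      exact helper_eq (by omega) (by omega)
  · unfold meas
    rw [if_neg (show ¬ (1 ≤ m - 1 ∧ m - 1 ≤ (n : ℤ)) by omega),
      if_pos (show 1 ≤ m ∧ m ≤ (n : ℤ) from ⟨h1, h2⟩),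
      if_neg (show ¬ pz z m ≤ i by omega)]
    exact helper_pos (by omega)

lemma measW3 {m i : ℤ} (h1 : 1 ≤ m) (h2 : m ≤ (n : ℤ)) (hw : i < pz z m) :
    meas n z (m + 1) i < meas n z m i := by
  have hb := pz_bound n z hz h1 h2
  by_cases hm : m + 1 ≤ (n : ℤ)
  · have hb' := pz_bound n z hz (by omega : (1:ℤ) ≤ m + 1) hm
    have hstep := pz_step n z hz h1 hm
    unfold meas
    rw [if_pos (show 1 ≤ m + 1 ∧ m + 1 ≤ (n : ℤ) from ⟨by omega, hm⟩),
      if_pos (show 1 ≤ m ∧ m ≤ (n : ℤ) from ⟨h1, h2⟩),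
      if_neg (show ¬ pz z m ≤ i by omega)]
    rcases hstep with h | h
    · rw [if_neg (show ¬ pz z (m + 1) ≤ i by omega)]
      exact helper_eq (by omega) (by omega)
    · by_cases hc : pz z (m + 1) ≤ i
      · rw [if_pos hc]
        exact helper_step (by omega) (by omega)
      · rw [if_neg hc]
        exact helper_step (by omega) (by omega)
  · unfold meas
    rw [if_neg (show ¬ (1 ≤ m + 1 ∧ m + 1 ≤ (n : ℤ)) by omega),
      if_pos (show 1 ≤ m ∧ m ≤ (n : ℤ) from ⟨h1, h2⟩),
      if_neg (show ¬ pz z m ≤ i by omega)]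
    exact helper_pos (by omega)

end

section
variable (n : ℕ) (z : ℕ → ℤ)

/-- Horizontal knitting: fill the pattern from the zig-zag values. -/
def knit (hz : ∀ k : ℕ, k + 1 < n → z (k + 1) = z k ∨ z (k + 1) = z k - 1)
    (t : Fin n → ℚ) (m i : ℤ) : ℚ :=
  if hr : 1 ≤ m ∧ m ≤ (n : ℤ) then
    if hzg : i = pz z m then t ⟨(m - 1).toNat, by omega⟩
    else if he : pz z m < i then
      (1 + knit hz t (m - 1) i) * (1 + knit hz t (m + 1) (i - 1)) / knit hz t m (i - 1)
    else
      (1 + knit hz t (m - 1) (i + 1)) * (1 + knit hz t (m + 1) i) / knit hz t m (i + 1)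
  else 0
termination_by meas n z m i
decreasing_by
  · exact measE2 hz hr.1 hr.2 (by omega)
  · exact measE3 hz hr.1 hr.2 (by omega)
  · exact measE1 hz hr.1 hr.2 (by omega)
  · exact measW2 hz hr.1 hr.2 (by omega)
  · exact measW3 hz hr.1 hr.2 (by omega)
  · exact measW1 hz hr.1 hr.2 (by omega)

end

section
variable {n : ℕ} {z : ℕ → ℤ}
    (hz : ∀ k : ℕ, k + 1 < n → z (k + 1) = z k ∨ z (k + 1) = z k - 1)
    (t : Fin n → ℚ)

lemma knit_out {m : ℤ} (h : ¬ (1 ≤ m ∧ m ≤ (n : ℤ))) (i : ℤ) :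
    knit n z hz t m i = 0 := by
  rw [knit, dif_neg h]

lemma knit_zig {m : ℤ} (h1 : 1 ≤ m) (h2 : m ≤ (n : ℤ)) :
    knit n z hz t m (pz z m) = t ⟨(m - 1).toNat, by omega⟩ := by
  rw [knit, dif_pos ⟨h1, h2⟩, dif_pos rfl]

lemma knit_east {m i : ℤ} (h1 : 1 ≤ m) (h2 : m ≤ (n : ℤ)) (he : pz z m < i) :
    knit n z hz t m i =
      (1 + knit n z hz t (m - 1) i) * (1 + knit n z hz t (m + 1) (i - 1)) /
        knit n z hz t m (i - 1) := by
  rw [knit, dif_pos ⟨h1, h2⟩, dif_neg (show ¬ i = pz z m by omega), dif_pos he]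

lemma knit_west {m i : ℤ} (h1 : 1 ≤ m) (h2 : m ≤ (n : ℤ)) (hw : i < pz z m) :
    knit n z hz t m i =
      (1 + knit n z hz t (m - 1) (i + 1)) * (1 + knit n z hz t (m + 1) i) /
        knit n z hz t m (i + 1) := by
  rw [knit, dif_pos ⟨h1, h2⟩, dif_neg (show ¬ i = pz z m by omega),
    dif_neg (show ¬ pz z m < i by omega)]

end

section
variable {n : ℕ} {z : ℕ → ℤ}
    (hz : ∀ k : ℕ, k + 1 < n → z (k + 1) = z k ∨ z (k + 1) = z k - 1)
    {t : Fin n → ℚ} (ht : ∀ k, 0 < t k)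

include ht in
lemma knit_pos : ∀ m i : ℤ, 1 ≤ m → m ≤ (n : ℤ) → 0 < knit n z hz t m i := by
  suffices H : ∀ N : ℕ, ∀ m i : ℤ, meas n z m i < N → 1 ≤ m → m ≤ (n : ℤ) →
      0 < knit n z hz t m i by
    exact fun m i h1 h2 => H (meas n z m i + 1) m i (by omega) h1 h2
  intro N
  induction N with
  | zero => intro m i h; omega
  | succ N ih =>
    intro m i hlt h1 h2
    rcases eq_or_ne i (pz z m) with hzg | hzg
    · subst hzg
      rw [knit_zig hz t h1 h2]
      exact ht _
    · have hup : ∀ j : ℤ, meas n z (m - 1) j < N → 0 ≤ knit n z hz t (m - 1) j := by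
        intro j hj
        by_cases hm : 1 ≤ m - 1
        · exact (ih (m - 1) j (by omega) hm (by omega)).le
        · rw [knit_out hz t (show ¬ (1 ≤ m - 1 ∧ m - 1 ≤ (n : ℤ)) by omega)]
      have hdn : ∀ j : ℤ, meas n z (m + 1) j < N → 0 ≤ knit n z hz t (m + 1) j := by
        intro j hj
        by_cases hm : m + 1 ≤ (n : ℤ)
        · exact (ih (m + 1) j (by omega) (by omega) hm).le
        · rw [knit_out hz t (show ¬ (1 ≤ m + 1 ∧ m + 1 ≤ (n : ℤ)) by omega)]
      rcases lt_or_ge (pz z m) i with he | hw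
      · rw [knit_east hz t h1 h2 he]
        have W := ih m (i - 1) (by have := measE1 hz h1 h2 he; omega) h1 h2
        have N1 := hup i (by have := measE2 hz h1 h2 he; omega)
        have S1 := hdn (i - 1) (by have := measE3 hz h1 h2 he; omega)
        exact div_pos (mul_pos (by linarith) (by linarith)) W
      · have hw' : i < pz z m := by omega
        rw [knit_west hz t h1 h2 hw']
        have W := ih m (i + 1) (by have := measW1 hz h1 h2 hw'; omega) h1 h2
        have N1 := hup (i + 1) (by have := measW2 hz h1 h2 hw'; omega)
        have S1 := hdn i (by have := measW3 hz h1 h2 hw'; omega)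
        exact div_pos (mul_pos (by linarith) (by linarith)) W

include ht in
lemma knit_nonneg (m i : ℤ) : 0 ≤ knit n z hz t m i := by
  by_cases hm : 1 ≤ m ∧ m ≤ (n : ℤ)
  · exact (knit_pos hz ht m i hm.1 hm.2).le
  · rw [knit_out hz t hm]

include ht in
lemma knit_diamond (m i : ℤ) (h1 : 1 ≤ m) (h2 : m ≤ (n : ℤ)) :
    knit n z hz t m i * knit n z hz t m (i + 1) =
      (1 + knit n z hz t (m - 1) (i + 1)) * (1 + knit n z hz t (m + 1) i) := by
  rcases lt_or_ge (pz z m) (i + 1) with he | hw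
  · have hW : knit n z hz t m i ≠ 0 := (knit_pos hz ht m i h1 h2).ne'
    rw [knit_east hz t h1 h2 he]
    rw [show i + 1 - 1 = i from by ring]
    rw [mul_comm, div_mul_cancel₀ _ hW]
  · have hw' : i < pz z m := by omega
    have hE : knit n z hz t m (i + 1) ≠ 0 := (knit_pos hz ht m (i + 1) h1 h2).ne'
    rw [knit_west hz t h1 h2 hw']
    rw [div_mul_cancel₀ _ hE]

end

section
variable {n : ℕ} {z : ℕ → ℤ}
    (hz : ∀ k : ℕ, k + 1 < n → z (k + 1) = z k ∨ z (k + 1) = z k - 1)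
    (t : Fin n → ℚ) (ht : ∀ k, 0 < t k)

/-- The full array of the knitted pattern. -/
def knitB (i j : ℤ) : ℚ :=
  if j - i ≤ 1 ∨ (n : ℤ) + 5 ≤ j - i then 0
  else if j - i = (n : ℤ) + 4 then -1
  else knit n z hz t (j - i - 2) i

lemma knitB_mid {i j : ℤ} (h1 : 2 ≤ j - i) (h2 : j - i ≤ (n : ℤ) + 3) :
    knitB hz t i j = knit n z hz t (j - i - 2) i := by
  unfold knitB
  rw [if_neg (by omega), if_neg (by omega)]

include ht in
/-- The knitted pattern is a closed Y-frieze. -/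
def knitFrieze : ClosedYFrieze n where
  b := knitB hz t
  diamond := by
    intro i j h3 hn3
    rw [knitB_mid hz t (by omega) (by omega),
      knitB_mid hz t (by omega : (2:ℤ) ≤ j + 1 - (i + 1)) (by omega),
      knitB_mid hz t (by omega : (2:ℤ) ≤ j - (i + 1)) (by omega)]
    rw [show j + 1 - (i + 1) - 2 = j - i - 2 from by ring,
      show j - (i + 1) - 2 = j - i - 2 - 1 from by ring]
    rcases eq_or_lt_of_le hn3 with htop | hmid
    · -- j - i = n + 3 : bottom row of zeros
      rw [show j - i - 2 = (n : ℤ) + 1 from by omega]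
      rw [knit_out hz t (show ¬ (1 ≤ (n:ℤ) + 1 ∧ (n:ℤ) + 1 ≤ (n : ℤ)) by omega)]
      unfold knitB
      rw [if_neg (by omega), if_pos (by omega : j + 1 - i = (n : ℤ) + 4)]
      ring
    · rw [knitB_mid hz t (by omega : (2:ℤ) ≤ j + 1 - i) (by omega),
        show j + 1 - i - 2 = j - i - 2 + 1 from by ring]
      exact knit_diamond hz ht (j - i - 2) i (by omega) (by omega)
  topZero := by
    intro i
    rw [knitB_mid hz t (by omega) (by omega)]
    rw [show i + 2 - i - 2 = (0:ℤ) from by ring]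
    rw [knit_out hz t (by norm_num)]
  botZero := by
    intro i
    rw [knitB_mid hz t (by omega) (by omega)]
    rw [show i + (n:ℤ) + 3 - i - 2 = (n:ℤ) + 1 from by ring]
    rw [knit_out hz t (show ¬ (1 ≤ (n:ℤ) + 1 ∧ (n:ℤ) + 1 ≤ (n : ℤ)) by omega)]
  negRow := by
    intro i
    unfold knitB
    rw [if_neg (by omega), if_pos (by omega : i + (n:ℤ) + 4 - i = (n : ℤ) + 4)]
  rowsNonzero := by
    intro k hk1 hk2
    refine ⟨0, ?_⟩
    rw [knitB_mid hz t (by omega) (by omega)]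
    rw [show (0:ℤ) + (k:ℤ) + 2 - 0 - 2 = (k:ℤ) from by ring]
    exact (knit_pos hz ht (k : ℤ) 0 (by omega) (by omega)).ne'
  outside := by
    intro i j h
    unfold knitB
    rw [if_pos h]

include ht in
lemma knitFrieze_positive : (knitFrieze hz t ht).Positive := by
  intro i k hk1 hk2
  show 0 < knitB hz t i (i + (k : ℤ) + 2)
  rw [knitB_mid hz t (by omega) (by omega)]
  rw [show i + (k:ℤ) + 2 - i - 2 = (k:ℤ) from by ring]
  exact knit_pos hz ht (k : ℤ) i (by omega) (by omega)

include ht in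
lemma knitFrieze_zig (k : Fin n) :
    (knitFrieze hz t ht).b (z k) (z k + (k : ℤ) + 3) = t k := by
  show knitB hz t (z k) (z k + (k : ℤ) + 3) = t k
  rw [knitB_mid hz t (by omega) (by omega)]
  rw [show z (k : ℕ) + (k:ℤ) + 3 - z (k : ℕ) - 2 = (k:ℤ) + 1 from by ring]
  have hp : pz z ((k : ℤ) + 1) = z (k : ℕ) := by
    unfold pz
    congr 1
    omega
  rw [← hp, knit_zig hz t (by omega) (by omega)]
  congr
  omega

end

section
variable {n : ℕ}

lemma row_diamond (P : ClosedYFrieze n) {m : ℤ} (h1 : 1 ≤ m) (h2 : m ≤ (n : ℤ)) (i : ℤ) :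
    P.b i (i + m + 2) * P.b (i + 1) (i + m + 3) =
      (1 + P.b (i + 1) (i + m + 2)) * (1 + P.b i (i + m + 3)) := by
  have h := P.diamond i (i + m + 2) (by omega) (by omega)
  rwa [show i + m + 2 + 1 = i + m + 3 from by ring] at h

lemma row_pos {P : ClosedYFrieze n} (hP : P.Positive) {m : ℤ}
    (h1 : 1 ≤ m) (h2 : m ≤ (n : ℤ)) (i : ℤ) : 0 < P.b i (i + m + 2) := by
  have h := hP i m.toNat (by omega) (by omega)
  rwa [show ((m.toNat : ℤ)) = m from by omega] at h

variable {z : ℕ → ℤ}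
    (hz : ∀ k : ℕ, k + 1 < n → z (k + 1) = z k ∨ z (k + 1) = z k - 1)

include hz in
lemma rows_eq {P Q : ClosedYFrieze n} (hP : P.Positive) (hQ : Q.Positive)
    (hzz : ∀ k : Fin n, P.b (z k) (z k + (k : ℤ) + 3) = Q.b (z k) (z k + (k : ℤ) + 3)) :
    ∀ m i : ℤ, 1 ≤ m → m ≤ (n : ℤ) → P.b i (i + m + 2) = Q.b i (i + m + 2) := by
  suffices H : ∀ N : ℕ, ∀ m i : ℤ, meas n z m i < N → 1 ≤ m → m ≤ (n : ℤ) →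
      P.b i (i + m + 2) = Q.b i (i + m + 2) by
    exact fun m i h1 h2 => H (meas n z m i + 1) m i (by omega) h1 h2
  intro N
  induction N with
  | zero => intro m i h; omega
  | succ N ih =>
    intro m i hlt h1 h2
    have hup : ∀ j : ℤ, meas n z (m - 1) j < N →
        P.b j (j + m + 1) = Q.b j (j + m + 1) := by
      intro j hj
      by_cases hm : 1 ≤ m - 1
      · have h := ih (m - 1) j hj hm (by omega)
        rwa [show j + (m - 1) + 2 = j + m + 1 from by ring] at h
      · have hm1 : m = 1 := by omega
        rw [hm1, show j + 1 + 1 = j + 2 from by ring, P.topZero, Q.topZero]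
    have hdn : ∀ j : ℤ, meas n z (m + 1) j < N →
        P.b j (j + m + 3) = Q.b j (j + m + 3) := by
      intro j hj
      by_cases hm : m + 1 ≤ (n : ℤ)
      · have h := ih (m + 1) j hj (by omega) hm
        rwa [show j + (m + 1) + 2 = j + m + 3 from by ring] at h
      · have hm1 : m = n := by omega
        rw [hm1, P.botZero, Q.botZero]
    rcases eq_or_ne i (pz z m) with hzg | hzg
    · have hk : ((m - 1).toNat : ℤ) = m - 1 := by omega
      have hkn : (m - 1).toNat < n := by omega
      have h := hzz ⟨(m - 1).toNat, hkn⟩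
      simp only [Fin.val_mk] at h
      rw [hk] at h
      have hi : i = z (m - 1).toNat := hzg
      rw [show z (m - 1).toNat + (m - 1) + 3 = z (m - 1).toNat + m + 2 from by ring] at h
      rw [hi]
      exact h
    · rcases lt_or_ge (pz z m) i with he | hw
      · -- eastwards: diamond with west entry at column i - 1
        have dP := row_diamond P h1 h2 (i - 1)
        have dQ := row_diamond Q h1 h2 (i - 1)
        rw [show i - 1 + 1 = i from by ring, show i - 1 + m + 2 = i + m + 1 from by ring,
          show i - 1 + m + 3 = i + m + 2 from by ring] at dP dQ
        have hW : P.b (i - 1) (i + m + 1) = Q.b (i - 1) (i + m + 1) := by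
          have hd := measE1 hz h1 h2 he
          have h := ih m (i - 1) (by omega) h1 h2
          rwa [show i - 1 + m + 2 = i + m + 1 from by ring] at h
        have hN : P.b i (i + m + 1) = Q.b i (i + m + 1) := by
          have hd := measE2 hz h1 h2 he
          exact hup i (by omega)
        have hS : P.b (i - 1) (i + m + 2) = Q.b (i - 1) (i + m + 2) := by
          have hd := measE3 hz h1 h2 he
          have h := hdn (i - 1) (by omega)
          rwa [show i - 1 + m + 3 = i + m + 2 from by ring] at h
        have hWne : P.b (i - 1) (i + m + 1) ≠ 0 := by
          have h := row_pos hP h1 h2 (i - 1)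
          rw [show i - 1 + m + 2 = i + m + 1 from by ring] at h
          exact h.ne'
        refine mul_left_cancel₀ hWne ?_
        calc P.b (i - 1) (i + m + 1) * P.b i (i + m + 2)
            = (1 + P.b i (i + m + 1)) * (1 + P.b (i - 1) (i + m + 2)) := dP
          _ = (1 + Q.b i (i + m + 1)) * (1 + Q.b (i - 1) (i + m + 2)) := by rw [hN, hS]
          _ = Q.b (i - 1) (i + m + 1) * Q.b i (i + m + 2) := dQ.symm
          _ = P.b (i - 1) (i + m + 1) * Q.b i (i + m + 2) := by rw [hW]
      · -- westwards: diamond with west entry at column i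
        have hw' : i < pz z m := by omega
        have dP := row_diamond P h1 h2 i
        have dQ := row_diamond Q h1 h2 i
        have hE : P.b (i + 1) (i + m + 3) = Q.b (i + 1) (i + m + 3) := by
          have hd := measW1 hz h1 h2 hw'
          have h := ih m (i + 1) (by omega) h1 h2
          rwa [show i + 1 + m + 2 = i + m + 3 from by ring] at h
        have hN : P.b (i + 1) (i + m + 2) = Q.b (i + 1) (i + m + 2) := by
          have hd := measW2 hz h1 h2 hw'
          have h := hup (i + 1) (by omega)
          rwa [show i + 1 + m + 1 = i + m + 2 from by ring] at h
        have hS : P.b i (i + m + 3) = Q.b i (i + m + 3) := by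
          have hd := measW3 hz h1 h2 hw'
          exact hdn i (by omega)
        have hEne : P.b (i + 1) (i + m + 3) ≠ 0 := by
          have h := row_pos hP h1 h2 (i + 1)
          rw [show i + 1 + m + 2 = i + m + 3 from by ring] at h
          exact h.ne'
        refine mul_right_cancel₀ hEne ?_
        calc P.b i (i + m + 2) * P.b (i + 1) (i + m + 3)
            = (1 + P.b (i + 1) (i + m + 2)) * (1 + P.b i (i + m + 3)) := dP
          _ = (1 + Q.b (i + 1) (i + m + 2)) * (1 + Q.b i (i + m + 3)) := by rw [hN, hS]
          _ = Q.b i (i + m + 2) * Q.b (i + 1) (i + m + 3) := dQ.symm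
          _ = Q.b i (i + m + 2) * P.b (i + 1) (i + m + 3) := by rw [hE]

include hz in
lemma frieze_eq {P Q : ClosedYFrieze n} (hP : P.Positive) (hQ : Q.Positive)
    (hzz : ∀ k : Fin n, P.b (z k) (z k + (k : ℤ) + 3) = Q.b (z k) (z k + (k : ℤ) + 3)) :
    P = Q := by
  have hb : P.b = Q.b := by
    funext i j
    by_cases h0 : j - i ≤ 1 ∨ (n : ℤ) + 5 ≤ j - i
    · rw [P.outside i j h0, Q.outside i j h0]
    · by_cases h2 : j - i = 2
      · rw [show j = i + 2 from by omega, P.topZero, Q.topZero]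
      · by_cases h3 : j - i = (n : ℤ) + 3
        · rw [show j = i + (n : ℤ) + 3 from by omega, P.botZero, Q.botZero]
        · by_cases h4 : j - i = (n : ℤ) + 4
          · rw [show j = i + (n : ℤ) + 4 from by omega, P.negRow, Q.negRow]
          · have h := rows_eq hz hP hQ hzz (j - i - 2) i (by omega) (by omega)
            rwa [show i + (j - i - 2) + 2 = j from by ring] at h
  cases P
  cases Q
  cases hb
  rfl

end
end YF

/-- Horizontal knitting bijection: for `n ≥ 1` and any zig-zag `z` (one position per
nonzero row, consecutive positions diagonally adjacent), reading off the zig-zag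
entries is a bijection from positive-valued closed Y-frieze patterns of width `n`
onto `n`-tuples of positive rationals; its inverse is horizontal knitting. -/
theorem stmt6 (n : ℕ) (hn : 1 ≤ n) (z : ℕ → ℤ)
    (hz : ∀ k : ℕ, k + 1 < n → z (k + 1) = z k ∨ z (k + 1) = z k - 1) :
    Set.BijOn (fun (P : ClosedYFrieze n) (k : Fin n) => P.b (z k) (z k + (k : ℤ) + 3))
      {P : ClosedYFrieze n | P.Positive} {t : Fin n → ℚ | ∀ k, 0 < t k} := by
  refine ⟨?_, ?_, ?_⟩
  · -- maps to
    intro P hP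
    intro k
    have h := hP (z (k : ℕ)) ((k : ℕ) + 1) (by omega) (by omega : (k : ℕ) + 1 ≤ n)
    rwa [show z (k : ℕ) + ((((k : ℕ) + 1 : ℕ)) : ℤ) + 2 = z (k : ℕ) + ((k : ℕ) : ℤ) + 3
      from by push_cast; ring] at h
  · -- injective
    intro P hP Q hQ h
    exact YF.frieze_eq hz hP hQ (fun k => congrFun h k)
  · -- surjective
    intro t ht
    exact ⟨YF.knitFrieze hz t ht, YF.knitFrieze_positive hz t ht,
      funext fun k => YF.knitFrieze_zig hz t ht k⟩
end

section
/- For each n ≥ 1, the number of arithmetic Y-frieze patterns of width n is finite. -/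
/-!
Let `x`, `y` be two adjacent diagonals of a pattern whose interior entries are at least `1`.
Multiplying the diamond relations down the two diagonals telescopes to
`(∏ xₖ yₖ) (1 + x₁) (1 + yₙ) = ∏ (1 + xₖ) ∏ (1 + yₖ) ≤ 4ⁿ ∏ xₖ yₖ`, so row `1` is bounded
by `4ⁿ`; the diamond rule gives `1 + x_{k+2} ≤ x_{k+1} y_{k+1}`, which bounds each further row
by the square of the bound on the previous one. Since the interior entries are nonzero, the
diamond rule determines every diagonal from either neighbour, so a pattern is determined by the
interior of a single diagonal, which takes finitely many values.
-/

open Finset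

theorem Finset.prod_one_add_le_two_pow_card_mul_prod {ι K : Type*} [CommRing K] [LinearOrder K]
    [IsStrictOrderedRing K] {s : Finset ι} {f : ι → K} (hf : ∀ i ∈ s, 1 ≤ f i) :
    ∏ i ∈ s, (1 + f i) ≤ 2 ^ #s * ∏ i ∈ s, f i := by
  calc ∏ i ∈ s, (1 + f i) ≤ ∏ i ∈ s, 2 * f i :=
        prod_le_prod (fun i hi => by linarith [hf i hi]) (fun i hi => by linarith [hf i hi])
    _ = 2 ^ #s * ∏ i ∈ s, f i := by rw [prod_mul_distrib, prod_const]

/-- `x` and `y` are adjacent diagonals, indexed by row, of a Y-frieze pattern of width `n`. -/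
def YDiamond {K : Type*} [CommRing K] (n : ℕ) (x y : ℕ → K) : Prop :=
  ∀ k < n, x (k + 1) * y (k + 1) = (1 + y k) * (1 + x (k + 2))

namespace YDiamond

variable {K : Type*} [CommRing K] {n : ℕ} {x x' y y' : ℕ → K}

theorem mono {m : ℕ} (h : YDiamond n x y) (hmn : m ≤ n) : YDiamond m x y :=
  fun k hk => h k (hk.trans_le hmn)

theorem prod_mul_eq (h : YDiamond n x y) (hy : y 0 = 0) :
    (∏ k ∈ range n, x (k + 1) * y (k + 1)) * ((1 + x 1) * (1 + y n)) =
      (∏ k ∈ range n, (1 + x (k + 1))) * (∏ k ∈ range n, (1 + y (k + 1))) * (1 + x (n + 1)) := by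
  induction n with
  | zero => simp [hy]
  | succ m ih =>
    simp only [prod_range_succ]
    linear_combination (1 + y (m + 1)) * (1 + x (m + 2)) * ih (h.mono m.le_succ) +
      (∏ k ∈ range m, x (k + 1) * y (k + 1)) * (1 + x 1) * (1 + y (m + 1)) * h m m.lt_succ_self

theorem unique_right [IsDomain K] (h : YDiamond n x y) (h' : YDiamond n x y')
    (hx : ∀ k < n, x (k + 1) ≠ 0) (h0 : y 0 = y' 0) : ∀ k ≤ n, y k = y' k := by
  intro k hk
  induction k with
  | zero => exact h0
  | succ k ih =>
    refine mul_left_cancel₀ (hx k hk) ?_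
    rw [h k hk, h' k hk, ih (by omega)]

theorem unique_left [IsDomain K] (h : YDiamond n x y) (h' : YDiamond n x' y)
    (hy : ∀ k < n, y (k + 1) ≠ 0) (htop : x (n + 1) = x' (n + 1)) :
    ∀ k ≤ n, x (k + 1) = x' (k + 1) := by
  intro k hk
  induction hk using Nat.decreasingInduction with
  | self => exact htop
  | of_succ k hk ih =>
    refine mul_right_cancel₀ (hy k hk) ?_
    rw [h k hk, h' k hk, ih]

theorem one_add_mul_one_add_le [LinearOrder K] [IsStrictOrderedRing K] (h : YDiamond n x y)
    (hy0 : y 0 = 0) (hxn : x (n + 1) = 0) (hx : ∀ k < n, 1 ≤ x (k + 1))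
    (hy : ∀ k < n, 1 ≤ y (k + 1)) : (1 + x 1) * (1 + y n) ≤ 4 ^ n := by
  have hX : 0 < ∏ k ∈ range n, x (k + 1) :=
    prod_pos fun k hk => one_pos.trans_le (hx k (mem_range.mp hk))
  have hY : 0 < ∏ k ∈ range n, y (k + 1) :=
    prod_pos fun k hk => one_pos.trans_le (hy k (mem_range.mp hk))
  have hX' := prod_one_add_le_two_pow_card_mul_prod fun k hk => hx k (mem_range.mp hk)
  have hY' := prod_one_add_le_two_pow_card_mul_prod fun k hk => hy k (mem_range.mp hk)
  rw [card_range] at hX' hY'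
  have key := h.prod_mul_eq hy0
  rw [hxn, add_zero, mul_one, prod_mul_distrib] at key
  refine le_of_mul_le_mul_left ?_ (mul_pos hX hY)
  calc _ = (∏ k ∈ range n, (1 + x (k + 1))) * ∏ k ∈ range n, (1 + y (k + 1)) := key
    _ ≤ (2 ^ n * ∏ k ∈ range n, x (k + 1)) * (2 ^ n * ∏ k ∈ range n, y (k + 1)) :=
        mul_le_mul hX' hY' (prod_nonneg fun k hk => by linarith [hy k (mem_range.mp hk)])
          (by positivity)
    _ = _ := by rw [show (4 : K) = 2 * 2 by norm_num, mul_pow]; ring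

end YDiamond

namespace ClosedYFrieze

variable {n : ℕ} {P Q : ClosedYFrieze n}

/-- The `i`-th diagonal of `P`, indexed by row: `P.diag i k` is the entry of row `k`. -/
def diag (P : ClosedYFrieze n) (i : ℤ) (k : ℕ) : ℚ := P.b i (i + k + 2)

@[simp]
theorem diag_zero (P : ClosedYFrieze n) (i : ℤ) : P.diag i 0 = 0 := by
  simpa [diag] using P.topZero i

@[simp]
theorem diag_width_succ (P : ClosedYFrieze n) (i : ℤ) : P.diag i (n + 1) = 0 := by
  simpa [diag, add_assoc] using P.botZero i

theorem yDiamond_diag (P : ClosedYFrieze n) (i : ℤ) :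
    YDiamond n (P.diag i) (P.diag (i + 1)) := by
  intro k hk
  have := P.diamond i (i + k + 3) (by omega) (by omega)
  simp only [diag]
  push_cast
  convert this using 3 <;> ring_nf

theorem ext_of_diag (h : ∀ i, P.diag i = Q.diag i) : P = Q := by
  have hb : P.b = Q.b := by
    funext i j
    rcases le_or_gt (j - i) 1 with hji | hji
    · rw [P.outside i j (Or.inl hji), Q.outside i j (Or.inl hji)]
    · have := congrFun (h i) (j - i - 2).toNat
      simp only [diag] at this
      rwa [show i + ((j - i - 2).toNat : ℤ) + 2 = j by omega] at this
  cases P; cases Q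
  subst hb
  rfl

/-- Outside its interior rows `1, …, n`, every diagonal reads `0, …, 0, 0, -1, 0, 0, …`. -/
theorem diag_eq_of_interior_eq {i : ℤ} (h : ∀ k < n, P.diag i (k + 1) = Q.diag i (k + 1)) :
    P.diag i = Q.diag i := by
  funext k
  rcases Nat.eq_zero_or_pos k with rfl | hk0
  · simp
  obtain ⟨k, rfl⟩ : ∃ j, k = j + 1 := ⟨k - 1, by omega⟩
  rcases lt_or_ge k n with hk | hk
  · exact h k hk
  rcases hk.eq_or_lt with rfl | hk
  · simp
  rcases (Nat.succ_le_of_lt hk).eq_or_lt with rfl | hk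
  · simp only [diag]
    push_cast
    rw [show i + (n + 1 + 1 : ℤ) + 2 = i + n + 4 by ring, P.negRow i, Q.negRow i]
  · simp only [diag]
    rw [P.outside _ _ (Or.inr (by omega)), Q.outside _ _ (Or.inr (by omega))]

theorem Positive.diag_ne_zero (hP : P.Positive) (i : ℤ) {k : ℕ} (hk : k < n) :
    P.diag i (k + 1) ≠ 0 :=
  (hP i (k + 1) (by omega) hk).ne'

theorem diag_succ_eq_of_diag_eq (hP : P.Positive) {i : ℤ} (h : P.diag i = Q.diag i) :
    P.diag (i + 1) = Q.diag (i + 1) :=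
  diag_eq_of_interior_eq fun k hk =>
    (P.yDiamond_diag i).unique_right (h ▸ Q.yDiamond_diag i)
      (fun k hk => hP.diag_ne_zero i hk) (by simp) (k + 1) hk

theorem diag_eq_of_diag_succ_eq (hP : P.Positive) {i : ℤ}
    (h : P.diag (i + 1) = Q.diag (i + 1)) : P.diag i = Q.diag i :=
  diag_eq_of_interior_eq fun k hk =>
    (P.yDiamond_diag i).unique_left (h ▸ Q.yDiamond_diag i)
      (fun k hk => hP.diag_ne_zero (i + 1) hk) (by simp) k hk.le

theorem eq_of_diag_zero_eq (hP : P.Positive) (h : P.diag 0 = Q.diag 0) : P = Q :=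
  ext_of_diag fun i => by
    induction i using Int.induction_on with
    | zero => exact h
    | succ i ih => exact diag_succ_eq_of_diag_eq hP ih
    | pred i ih => exact diag_eq_of_diag_succ_eq hP (by rwa [sub_add_cancel])

section Bounds

variable (hP : ∀ i, ∀ k < n, 1 ≤ P.diag i (k + 1))
include hP

theorem diag_nonneg (i : ℤ) {k : ℕ} (hk : k ≤ n + 1) : 0 ≤ P.diag i k := by
  rcases Nat.eq_zero_or_pos k with rfl | hk0
  · simp
  rcases hk.eq_or_lt with rfl | hk
  · simp
  obtain ⟨k, rfl⟩ : ∃ j, k = j + 1 := ⟨k - 1, by omega⟩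
  exact zero_le_one.trans (hP i k (by omega))

theorem one_add_diag_one_le (i : ℤ) : 1 + P.diag i 1 ≤ 4 ^ n := by
  have := (P.yDiamond_diag i).one_add_mul_one_add_le (by simp) (by simp) (hP i) (hP (i + 1))
  nlinarith [diag_nonneg hP i (k := 1) (by omega), diag_nonneg hP (i + 1) (k := n) (by omega)]

theorem diag_succ_le_pow (i : ℤ) {j : ℕ} (hj : j < n) :
    P.diag i (j + 1) ≤ ((4 : ℚ) ^ n) ^ 2 ^ j := by
  induction j generalizing i with
  | zero => simpa using (one_add_diag_one_le hP i).trans' (by linarith)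
  | succ j ih =>
    have hxy : P.diag i (j + 2) ≤ P.diag i (j + 1) * P.diag (i + 1) (j + 1) := by
      rw [P.yDiamond_diag i j (by omega)]
      nlinarith [diag_nonneg hP (i + 1) (k := j) (by omega),
        diag_nonneg hP i (k := j + 2) (by omega)]
    calc P.diag i (j + 2) ≤ P.diag i (j + 1) * P.diag (i + 1) (j + 1) := hxy
      _ ≤ ((4 : ℚ) ^ n) ^ 2 ^ j * ((4 : ℚ) ^ n) ^ 2 ^ j :=
        mul_le_mul (ih i (by omega)) (ih (i + 1) (by omega))
          (diag_nonneg hP (i + 1) (by omega)) (by positivity)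
      _ = ((4 : ℚ) ^ n) ^ 2 ^ (j + 1) := by rw [← pow_add, pow_succ, mul_two]

theorem diag_le (i : ℤ) {k : ℕ} (hk : k < n) : P.diag i (k + 1) ≤ 4 ^ (n * 2 ^ n) := by
  calc P.diag i (k + 1) ≤ ((4 : ℚ) ^ n) ^ 2 ^ k := diag_succ_le_pow hP i hk
    _ ≤ ((4 : ℚ) ^ n) ^ 2 ^ n :=
      pow_le_pow_right₀ (one_le_pow₀ (by norm_num)) (Nat.pow_le_pow_right (by norm_num) hk.le)
    _ = 4 ^ (n * 2 ^ n) := by rw [pow_mul]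

end Bounds

theorem Arithmetic.one_le_diag (hP : P.Arithmetic) (i : ℤ) {k : ℕ} (hk : k < n) :
    1 ≤ P.diag i (k + 1) := by
  obtain ⟨m, hm, he⟩ := hP i (k + 1) (by omega) hk
  rw [diag, he]
  exact_mod_cast hm

theorem Arithmetic.positive (hP : P.Arithmetic) : P.Positive := fun i k hk1 hkn => by
  obtain ⟨k, rfl⟩ : ∃ j, k = j + 1 := ⟨k - 1, by omega⟩
  exact one_pos.trans_le (hP.one_le_diag i hkn)

theorem Arithmetic.diag_mem_image (hP : P.Arithmetic) (i : ℤ) {k : ℕ} (hk : k < n) :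
    P.diag i (k + 1) ∈ (Nat.cast : ℕ → ℚ) '' Set.Iic (4 ^ (n * 2 ^ n)) := by
  obtain ⟨m, -, he⟩ := hP i (k + 1) (by omega) hk
  have hle := diag_le (fun i k hk => hP.one_le_diag i hk) i hk
  rw [diag, he] at hle ⊢
  exact ⟨m, by exact_mod_cast hle, rfl⟩

end ClosedYFrieze

theorem stmt7_general (n : ℕ) :
    {P : ClosedYFrieze n | P.Arithmetic}.Finite := by
  let interior (P : ClosedYFrieze n) (k : Fin n) : ℚ := P.diag 0 (k + 1)
  refine Set.Finite.of_finite_image (f := interior) ?_ ?_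
  · refine (Set.Finite.pi fun _ => (Set.finite_Iic (4 ^ (n * 2 ^ n))).image Nat.cast).subset ?_
    rintro _ ⟨P, hP, rfl⟩ k -
    exact hP.diag_mem_image 0 k.isLt
  · intro P hP Q _ h
    exact ClosedYFrieze.eq_of_diag_zero_eq hP.positive
      (ClosedYFrieze.diag_eq_of_interior_eq fun k hk => congrFun h ⟨k, hk⟩)

/-- For each `n ≥ 1`, the number of arithmetic Y-frieze patterns of width `n`
is finite. -/
theorem stmt7 (n : ℕ) (hn : 1 ≤ n) :
    {P : ClosedYFrieze n | P.Arithmetic}.Finite :=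
  stmt7_general n
end

section
/- The closed Y-frieze pattern of width 3 obtained by horizontal knitting from the value 1 placed in each of the three nonzero rows along a zig-zag contains a non-integer entry (namely 7/2); hence Y-frieze patterns knitted from all-1 zig-zags need not be arithmetic. -/

def r1 : ℤ → ℚ := fun i => if i % 6 = 0 then 1 else if i % 6 = 1 then 2
  else if i % 6 = 2 then 7/2 else if i % 6 = 3 then 2 else if i % 6 = 4 then 1 else 7
def r2 : ℤ → ℚ := fun i => if i % 6 = 0 then 1 else if i % 6 = 3 then 1 else 6
def r3 : ℤ → ℚ := fun i => if i % 6 = 0 then 1 else if i % 6 = 1 then 7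
  else if i % 6 = 2 then 1 else if i % 6 = 3 then 2 else if i % 6 = 4 then 7/2 else 2

lemma mod6 (i : ℤ) :
    (i % 6 = 0 ∧ (i+1) % 6 = 1) ∨ (i % 6 = 1 ∧ (i+1) % 6 = 2) ∨ (i % 6 = 2 ∧ (i+1) % 6 = 3) ∨
    (i % 6 = 3 ∧ (i+1) % 6 = 4) ∨ (i % 6 = 4 ∧ (i+1) % 6 = 5) ∨ (i % 6 = 5 ∧ (i+1) % 6 = 0) := by
  omega

lemma key1 : ∀ i : ℤ, r1 i * r1 (i + 1) = 1 + r2 i := by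
  intro i
  rcases mod6 i with ⟨h,h'⟩|⟨h,h'⟩|⟨h,h'⟩|⟨h,h'⟩|⟨h,h'⟩|⟨h,h'⟩ <;> norm_num [r1, r2, h, h']
lemma key2 : ∀ i : ℤ, r2 i * r2 (i + 1) = (1 + r1 (i + 1)) * (1 + r3 i) := by
  intro i
  rcases mod6 i with ⟨h,h'⟩|⟨h,h'⟩|⟨h,h'⟩|⟨h,h'⟩|⟨h,h'⟩|⟨h,h'⟩ <;> norm_num [r1, r2, r3, h, h']
lemma key3 : ∀ i : ℤ, r3 i * r3 (i + 1) = 1 + r2 (i + 1) := by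
  intro i
  rcases mod6 i with ⟨h,h'⟩|⟨h,h'⟩|⟨h,h'⟩|⟨h,h'⟩|⟨h,h'⟩|⟨h,h'⟩ <;> norm_num [r2, r3, h, h']
lemma pos1 : ∀ i : ℤ, 0 < r1 i := by intro i; unfold r1; split_ifs <;> norm_num
lemma pos2 : ∀ i : ℤ, 0 < r2 i := by intro i; unfold r2; split_ifs <;> norm_num
lemma pos3 : ∀ i : ℤ, 0 < r3 i := by intro i; unfold r3; split_ifs <;> norm_num

def fb : ℤ → ℤ → ℚ := fun i j =>
  if j - i = 3 then r1 i
  else if j - i = 4 then r2 i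
  else if j - i = 5 then r3 i
  else if j - i = 7 then -1 else 0

lemma fb3 (i j : ℤ) (h : j - i = 3) : fb i j = r1 i := by simp [fb, h]
lemma fb4 (i j : ℤ) (h : j - i = 4) : fb i j = r2 i := by simp [fb, h]
lemma fb5 (i j : ℤ) (h : j - i = 5) : fb i j = r3 i := by simp [fb, h]
lemma fb7 (i j : ℤ) (h : j - i = 7) : fb i j = -1 := by simp [fb, h]
lemma fb0 (i j : ℤ) (h : j - i ≠ 3 ∧ j - i ≠ 4 ∧ j - i ≠ 5 ∧ j - i ≠ 7) : fb i j = 0 := by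
  simp [fb, h.1, h.2.1, h.2.2.1, h.2.2.2]

def F : ClosedYFrieze 3 where
  b := fb
  diamond := by
    intro i j h1 h2
    have h : j - i = 3 ∨ j - i = 4 ∨ j - i = 5 ∨ j - i = 6 := by omega
    rcases h with h | h | h | h
    · rw [fb3 i j h, fb3 (i+1) (j+1) (by omega), fb0 (i+1) j (by omega),
        fb4 i (j+1) (by omega)]
      simpa using key1 i
    · rw [fb4 i j h, fb4 (i+1) (j+1) (by omega), fb3 (i+1) j (by omega),
        fb5 i (j+1) (by omega)]
      exact key2 i
    · rw [fb5 i j h, fb5 (i+1) (j+1) (by omega), fb4 (i+1) j (by omega),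
        fb0 i (j+1) (by omega)]
      simpa using key3 i
    · rw [fb0 i j (by omega), fb0 (i+1) (j+1) (by omega), fb7 i (j+1) (by omega)]
      ring
  topZero := fun i => fb0 i (i+2) (by omega)
  botZero := fun i => fb0 i (i + 3 + 3) (by omega)
  negRow := fun i => fb7 i (i + 3 + 4) (by omega)
  rowsNonzero := by
    intro k hk1 hk2
    refine ⟨0, ?_⟩
    interval_cases k <;> push_cast
    · rw [fb3 0 3 (by omega)]; exact (pos1 0).ne'
    · rw [fb4 0 4 (by omega)]; exact (pos2 0).ne'
    · rw [fb5 0 5 (by omega)]; exact (pos3 0).ne'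
  outside := fun i j h => fb0 i j (by omega)

/-- The closed Y-frieze pattern of width 3 knitted horizontally from the value `1`
placed in each of the three nonzero rows along the NW-to-SE diagonal zig-zag
exists, and it contains the non-integer entry `7/2` (in its first row); hence
patterns knitted from all-`1` zig-zags need not be arithmetic. -/
theorem stmt9 :
    (∃ P : ClosedYFrieze 3, P.Positive ∧ P.b 0 3 = 1 ∧ P.b 0 4 = 1 ∧ P.b 0 5 = 1) ∧
    (∀ P : ClosedYFrieze 3, P.Positive → P.b 0 3 = 1 → P.b 0 4 = 1 → P.b 0 5 = 1 →
      ∃ i : ℤ, P.b i (i + 3) = 7 / 2) := by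
  constructor
  · refine ⟨F, ?_, ?_, ?_, ?_⟩
    · intro i k hk1 hk2
      show 0 < fb i _
      interval_cases k <;> push_cast
      · rw [fb3 i (i + 1 + 2) (by omega)]; exact pos1 _
      · rw [fb4 i (i + 2 + 2) (by omega)]; exact pos2 _
      · rw [fb5 i (i + 3 + 2) (by omega)]; exact pos3 _
    · show fb 0 3 = 1; rw [fb3 0 3 (by omega)]; norm_num [r1]
    · show fb 0 4 = 1; rw [fb4 0 4 (by omega)]; norm_num [r2]
    · show fb 0 5 = 1; rw [fb5 0 5 (by omega)]; norm_num [r3]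
  · intro P _ h03 h04 h05
    have t13 : P.b 1 3 = 0 := by have := P.topZero 1; norm_num at this; exact this
    have t24 : P.b 2 4 = 0 := by have := P.topZero 2; norm_num at this; exact this
    have b06 : P.b 0 6 = 0 := by have := P.botZero 0; norm_num at this; exact this
    have d03 := P.diamond 0 3 (by norm_num) (by norm_num)
    have d04 := P.diamond 0 4 (by norm_num) (by norm_num)
    have d14 := P.diamond 1 4 (by norm_num) (by norm_num)
    norm_num [h03, h04, h05, t13, t24, b06] at d03 d04 d14
    refine ⟨2, ?_⟩
    rw [d03] at d14
    rw [d04] at d14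
    norm_num
    linarith
end

section
/- For n even, two arithmetic frieze patterns of width n with the same second row are equal; i.e., the map sending a frieze pattern to its second row is injective on arithmetic frieze patterns of even width. -/
/-- A closed (Coxeter) frieze pattern of width `n`: a staggered array `a i j`
(row `k` consists of entries `a i (i+k+1)`) satisfying the diamond rule
`a_{i,j} a_{i+1,j+1} = 1 + a_{i,j+1} a_{i+1,j}`, bounded above and below by
rows of `1`s, and normalized to `0` outside. -/
structure ClosedFrieze (n : ℕ) where
  a : ℤ → ℤ → ℚ
  diamond : ∀ i j : ℤ, 2 ≤ j - i → j - i ≤ (n : ℤ) + 1 →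
    a i j * a (i + 1) (j + 1) = 1 + a i (j + 1) * a (i + 1) j
  topOne : ∀ i : ℤ, a i (i + 1) = 1
  botOne : ∀ i : ℤ, a i (i + (n : ℤ) + 2) = 1
  outside : ∀ i j : ℤ, j - i ≤ 0 ∨ (n : ℤ) + 3 ≤ j - i → a i j = 0

/-- All entries of the interior rows are positive integers. -/
def ClosedFrieze.Arithmetic {n : ℕ} (A : ClosedFrieze n) : Prop :=
  ∀ (i : ℤ) (k : ℕ), 1 ≤ k → k ≤ n → ∃ m : ℕ, 0 < m ∧ A.a i (i + (k : ℤ) + 1) = (m : ℚ)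

/-!
The diamond rule on the first two rows reads `a i (i+2) * a (i+1) (i+3) = 1 + a i (i+3)`, so for
two friezes with the same second row the ratio `r i` of their first-row entries satisfies
`r i * r (i+1) = 1`; hence `r` is `2`-periodic. By glide symmetry the first row is
`(n+3)`-periodic, an odd period when `n` is even, so also `r (i+1) = r i`; thus `r i ^ 2 = 1` and
positivity forces `r = 1`. Every further row is determined by the first through the continuant
recurrence along the diagonals.
-/

theorem eq_of_mul_succ_eq_of_periodic {α : Type*} [Field α] [LinearOrder α]
    [IsStrictOrderedRing α] {x y : ℤ → α} {p : ℤ} (hx : ∀ i, 0 < x i) (hy : ∀ i, 0 < y i)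
    (hp : Odd p) (hxp : Function.Periodic x p) (hyp : Function.Periodic y p)
    (h : ∀ i, x i * x (i + 1) = y i * y (i + 1)) : x = y := by
  set r : ℤ → α := fun i => x i / y i
  have hr_pos (i : ℤ) : 0 < r i := div_pos (hx i) (hy i)
  have hr_mul (i : ℤ) : r i * r (i + 1) = 1 := by
    simp only [r]
    rw [div_mul_div_comm, h, div_self (mul_pos (hy i) (hy (i + 1))).ne']
  have hr_two : Function.Periodic r 2 := fun i => by
    have := (hr_mul i).trans (hr_mul (i + 1)).symm
    rw [add_assoc, one_add_one_eq_two] at this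
    exact (mul_left_cancel₀ (hr_pos (i + 1)).ne' (by linarith [this])).symm
  have hr_p : Function.Periodic r p := fun i => by simp only [r, hxp i, hyp i]
  obtain ⟨m, rfl⟩ := hp
  have hr_succ (i : ℤ) : r (i + 1) = r i :=
    calc r (i + 1) = r (i + 1 + m * 2) := (hr_two.int_mul m (i + 1)).symm
      _ = r (i + (2 * m + 1)) := by ring_nf
      _ = r i := hr_p i
  funext i
  have hsq : r i * r i = 1 := by simpa only [hr_succ] using hr_mul i
  have : r i = 1 := by nlinarith [hr_pos i]
  exact (div_eq_one_iff_eq (hy i).ne').mp this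

namespace ClosedFrieze

variable {n : ℕ}

theorem ext {A B : ClosedFrieze n} (h : A.a = B.a) : A = B := by
  cases A; cases B; subst h; rfl

def Positive (A : ClosedFrieze n) : Prop :=
  ∀ i j : ℤ, 1 ≤ j - i → j - i ≤ (n : ℤ) + 2 → 0 < A.a i j

theorem Arithmetic.positive {A : ClosedFrieze n} (hA : A.Arithmetic) : A.Positive := by
  intro i j h1 h2
  obtain ⟨k, rfl⟩ : ∃ k : ℕ, j = i + k + 1 := ⟨(j - i - 1).toNat, by omega⟩
  rcases Nat.eq_zero_or_pos k with rfl | hk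
  · simp [A.topOne]
  rcases (show k ≤ n + 1 by omega).eq_or_lt with rfl | hkn
  · rw [show i + ((n + 1 : ℕ) : ℤ) + 1 = i + n + 2 by push_cast; ring, A.botOne]
    exact one_pos
  obtain ⟨m, hm, he⟩ := hA i k hk (by omega)
  rw [he]
  exact_mod_cast hm

theorem eq_of_forall_entries_eq {A B : ClosedFrieze n}
    (h : ∀ i j : ℤ, 1 ≤ j - i → j - i ≤ (n : ℤ) + 2 → A.a i j = B.a i j) : A = B := by
  refine ext (funext₂ fun i j => ?_)
  by_cases hij : 1 ≤ j - i ∧ j - i ≤ (n : ℤ) + 2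
  · exact h i j hij.1 hij.2
  · rw [A.outside i j (by omega), B.outside i j (by omega)]

theorem first_row_mul_succ (A : ClosedFrieze n) (hn : 1 ≤ n) (i : ℤ) :
    A.a i (i + 2) * A.a (i + 1) (i + 1 + 2) = 1 + A.a i (i + 3) := by
  have hD := A.diamond i (i + 2) (by omega) (by omega)
  have h1 : A.a (i + 1) (i + 2) = 1 := by rw [show i + 2 = i + 1 + 1 by ring]; exact A.topOne _
  rw [show i + 2 + 1 = i + 3 by ring, h1, mul_one] at hD
  rwa [show i + 1 + 2 = i + 3 by ring]

theorem Positive.continuant {A : ClosedFrieze n} (hA : A.Positive) {d : ℕ} (hd : d ≤ n)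
    (i : ℤ) : A.a i (i + d + 2) = A.a (i + d) (i + d + 2) * A.a i (i + d + 1) - A.a i (i + d) := by
  induction d generalizing i with
  | zero =>
    have := A.topOne i
    simp_all [A.outside i i (by omega)]
  | succ d ih =>
    rcases d with _ | d
    · have h := A.first_row_mul_succ (by omega) i
      have h1 := A.topOne i
      push_cast
      ring_nf at h h1 ⊢
      linear_combination h1 - h
    · have ih := ih (by omega) (i + 1)
      have hD1 := A.diamond i (i + d + 2) (by omega) (by omega)
      have hD2 := A.diamond i (i + d + 3) (by omega) (by omega)
      have hpos := hA (i + 1) (i + d + 3) (by omega) (by omega)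
      refine mul_right_cancel₀ hpos.ne' ?_
      push_cast at ih ⊢
      ring_nf at ih hD1 hD2 ⊢
      linear_combination hD1 - hD2 + A.a i (3 + i + d) * ih

theorem Positive.last_row_eq_first_row {A : ClosedFrieze n} (hA : A.Positive) (hn : 1 ≤ n)
    (i : ℤ) : A.a i (i + n + 1) = A.a (i + n + 1) (i + n + 3) := by
  have hC := hA.continuant le_rfl (i + 1)
  have hD := A.diamond i (i + n + 1) (by omega) (by omega)
  have hB := A.botOne i
  have hB' := A.botOne (i + 1)
  have hpos := hA (i + 1) (i + n + 2) (by omega) (by omega)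
  refine mul_right_cancel₀ hpos.ne' ?_
  ring_nf at hC hD hB hB' ⊢
  linear_combination hD + hC - hB' + A.a (1 + i) (1 + i + n) * hB

def reflect (A : ClosedFrieze n) : ClosedFrieze n where
  a i j := A.a (-j) (-i)
  diamond i j h1 h2 := by
    have hD := A.diamond (-(j + 1)) (-(i + 1)) (by omega) (by omega)
    rw [show -(j + 1) + 1 = -j by ring, show -(i + 1) + 1 = -i by ring] at hD
    linear_combination hD
  topOne i := by
    simpa only [show -(i + 1) + 1 = -i by ring] using A.topOne (-(i + 1))
  botOne i := by
    simpa only [show -(i + n + 2) + n + 2 = -i by ring] using A.botOne (-(i + n + 2))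
  outside i j h := A.outside (-j) (-i) (by omega)

theorem reflect_a (A : ClosedFrieze n) (i j : ℤ) : A.reflect.a i j = A.a (-j) (-i) := rfl

theorem Positive.reflect {A : ClosedFrieze n} (hA : A.Positive) : A.reflect.Positive :=
  fun i j h1 h2 => hA (-j) (-i) (by omega) (by omega)

theorem Positive.first_row_periodic {A : ClosedFrieze n} (hA : A.Positive) (hn : 1 ≤ n) :
    Function.Periodic (fun i => A.a i (i + 2)) (n + 3) := fun i => by
  -- row `n` is row `1` shifted to the right, and, by reflection, also shifted to the left
  have h := hA.last_row_eq_first_row hn (i + 2)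
  have h' := hA.reflect.last_row_eq_first_row hn (-(i + n + 3))
  rw [reflect_a, reflect_a] at h'
  ring_nf at h h' ⊢
  linarith

theorem Positive.eq_of_first_row_eq {A B : ClosedFrieze n} (hA : A.Positive) (hB : B.Positive)
    (h : ∀ i, A.a i (i + 2) = B.a i (i + 2)) : A = B := by
  suffices hrow : ∀ d : ℕ, d ≤ n + 1 → ∀ i : ℤ, A.a i (i + d + 1) = B.a i (i + d + 1) by
    refine eq_of_forall_entries_eq fun i j h1 h2 => ?_
    obtain ⟨d, rfl⟩ : ∃ d : ℕ, j = i + d + 1 := ⟨(j - i - 1).toNat, by omega⟩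
    exact hrow d (by omega) i
  intro d
  induction d using Nat.strong_induction_on with
  | _ d ih =>
    intro hd i
    match d with
    | 0 => simp only [CharP.cast_eq_zero, add_zero, A.topOne, B.topOne]
    | 1 => simpa only [Nat.cast_one, add_assoc, one_add_one_eq_two] using h i
    | d + 2 =>
      have hCA := hA.continuant (d := d + 1) (by omega) i
      have hCB := hB.continuant (d := d + 1) (by omega) i
      have h1 := ih (d + 1) (by omega) (by omega) i
      have h0 := ih d (by omega) (by omega) i
      have hx := h (i + d + 1)
      push_cast at hCA hCB h1 h0 hx ⊢
      ring_nf at hCA hCB h1 h0 hx ⊢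
      rw [hCA, hCB, h1, h0, hx]

end ClosedFrieze

/-- For `n` even, two arithmetic frieze patterns of width `n` with the same second
row `(a i (i+3))` are equal. -/
theorem stmt13 (n : ℕ) (hn : 1 ≤ n) (hev : Even n) (A A' : ClosedFrieze n)
    (hA : A.Arithmetic) (hA' : A'.Arithmetic)
    (h2 : ∀ i : ℤ, A.a i (i + 3) = A'.a i (i + 3)) : A = A' := by
  have hP := hA.positive
  have hP' := hA'.positive
  refine hP.eq_of_first_row_eq hP' (congrFun ?_)
  refine eq_of_mul_succ_eq_of_periodic (p := n + 3) (fun i => hP i (i + 2) (by omega) (by omega))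
    (fun i => hP' i (i + 2) (by omega) (by omega)) ?_ (hP.first_row_periodic hn)
    (hP'.first_row_periodic hn) fun i => ?_
  · exact_mod_cast hev.add_odd (by decide)
  · simp only [A.first_row_mul_succ hn, A'.first_row_mul_succ hn, h2]
end

section
/- For n odd, each Y-equivalence class of arithmetic frieze patterns of width n contains at most two elements: at most two arithmetic frieze patterns of width n share a given second row. -/
/-!
Write `c i = a i (i + 2)` for the quiddity row. The diamond rule at the top of the pattern
gives `c i * c (i + 1) = 1 + a i (i + 3)`, so for Y-equivalent friezes `A`, `B` the ratio
`c_B i / c_A i` is inverted at each step: it is `t` at even and `t⁻¹` at odd positions,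
where `t = c_B 0 / c_A 0`. The diagonals obey the linear recurrence
`a i (j + 2) = c j * a i (j + 1) - a i j`, so `c`, hence `c 0`, determines the frieze.
An arithmetic frieze has some `c i = 1`: otherwise the diagonals would grow strictly and
could not end in `1`. Now let `A`, `B`, `C` be Y-equivalent with `c_A 0 < c_B 0 < c_C 0`
and `c_B i = 1`. For even `i`, `c_A i = c_A 0 / c_B 0 < 1`; for odd `i`,
`c_C i = c_B 0 / c_C 0 < 1`. Either way an entry of an arithmetic frieze is below `1`.
-/

theorem Set.ncard_le_two_of_forall_not_lt_lt {α : Type*} [LinearOrder α] {T : Set α}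
    (h : ∀ x ∈ T, ∀ y ∈ T, ∀ z ∈ T, ¬(x < y ∧ y < z)) : T.ncard ≤ 2 := by
  by_contra! hT
  have hfin : T.Finite := Set.finite_of_ncard_pos (by omega)
  obtain ⟨x, hx, y, hy, z, hz, hxy, hxz, hyz⟩ := (Set.two_lt_ncard hfin).1 hT
  have := h x hx y hy z hz; have := h x hx z hz y hy; have := h y hy x hx z hz
  have := h y hy z hz x hx; have := h z hz x hx y hy; have := h z hz y hy x hx
  grind

theorem Function.Periodic.of_mul_add_one_eq_one {M : Type*} [CommMonoid M] {r : ℤ → M}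
    (h : ∀ i, r i * r (i + 1) = 1) : Function.Periodic r 2 := fun i => by
  calc r (i + 2) = r (i + 2) * (r i * r (i + 1)) := by rw [h, mul_one]
    _ = r i * (r (i + 1) * r (i + 1 + 1)) := by rw [show i + 1 + 1 = i + 2 by ring]; ac_rfl
    _ = r i := by rw [h, mul_one]

theorem apply_eq_apply_zero_of_even {M : Type*} [CommMonoid M] {r : ℤ → M}
    (h : ∀ i, r i * r (i + 1) = 1) {i : ℤ} (hi : Even i) : r i = r 0 := by
  obtain ⟨k, rfl⟩ := hi
  simpa [← two_mul, mul_comm] using (Function.Periodic.of_mul_add_one_eq_one h).int_mul_eq k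

theorem apply_zero_mul_apply_eq_one_of_odd {M : Type*} [CommMonoid M] {r : ℤ → M}
    (h : ∀ i, r i * r (i + 1) = 1) {i : ℤ} (hi : Odd i) : r 0 * r i = 1 := by
  obtain ⟨k, rfl⟩ := hi
  have hk := (Function.Periodic.of_mul_add_one_eq_one h).int_mul k 1
  rw [Int.cast_id] at hk
  rw [show 2 * k + 1 = 1 + k * 2 by ring, hk]
  simpa using h 0

namespace ClosedFrieze

variable {n : ℕ}

def quiddity (A : ClosedFrieze n) (i : ℤ) : ℚ := A.a i (i + 2)

def YEquiv (A B : ClosedFrieze n) : Prop := ∀ i : ℤ, A.a i (i + 3) = B.a i (i + 3)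

theorem YEquiv.symm {A B : ClosedFrieze n} (h : A.YEquiv B) : B.YEquiv A :=
  fun i => (h i).symm

theorem Arithmetic.exists_nat_eq {A : ClosedFrieze n} (hA : A.Arithmetic) {i j : ℤ}
    (h1 : 1 ≤ j - i) (h2 : j - i ≤ n + 2) : ∃ m : ℕ, 0 < m ∧ A.a i j = m := by
  rcases h1.eq_or_lt with h1 | h1
  · exact ⟨1, one_pos, by simpa [show j = i + 1 by omega] using A.topOne i⟩
  rcases h2.eq_or_lt with h2 | h2
  · exact ⟨1, one_pos, by simpa [show j = i + n + 2 by omega] using A.botOne i⟩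
  obtain ⟨m, hm, he⟩ := hA i (j - i - 1).toNat (by omega) (by omega)
  exact ⟨m, hm, by rwa [show i + ((j - i - 1).toNat : ℤ) + 1 = j by omega] at he⟩

theorem Arithmetic.one_le {A : ClosedFrieze n} (hA : A.Arithmetic) {i j : ℤ}
    (h1 : 1 ≤ j - i) (h2 : j - i ≤ n + 2) : 1 ≤ A.a i j := by
  obtain ⟨m, hm, he⟩ := hA.exists_nat_eq h1 h2
  rw [he]
  exact_mod_cast hm

theorem Arithmetic.pos {A : ClosedFrieze n} (hA : A.Arithmetic) {i j : ℤ}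
    (h1 : 1 ≤ j - i) (h2 : j - i ≤ n + 2) : 0 < A.a i j :=
  zero_lt_one.trans_le (hA.one_le h1 h2)

theorem Arithmetic.quiddity_pos {A : ClosedFrieze n} (hA : A.Arithmetic) (i : ℤ) :
    0 < A.quiddity i :=
  hA.pos (by omega) (by omega)

theorem Arithmetic.one_le_quiddity {A : ClosedFrieze n} (hA : A.Arithmetic) (i : ℤ) :
    1 ≤ A.quiddity i :=
  hA.one_le (by omega) (by omega)

theorem diamond' (A : ClosedFrieze n) {i j : ℤ} (h1 : 1 ≤ j - i) (h2 : j - i ≤ n + 2) :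
    A.a i j * A.a (i + 1) (j + 1) = 1 + A.a i (j + 1) * A.a (i + 1) j := by
  rcases h1.eq_or_lt with h1 | h1
  · obtain rfl : j = i + 1 := by omega
    rw [A.topOne i, A.topOne (i + 1), A.outside (i + 1) (i + 1) (by omega)]
    ring
  rcases h2.eq_or_lt with h2 | h2
  · obtain rfl : j = i + n + 2 := by omega
    rw [A.botOne, A.outside i (i + n + 2 + 1) (by omega),
      show i + n + 2 + 1 = i + 1 + n + 2 by ring, A.botOne]
    ring
  exact A.diamond i j (by omega) (by omega)

theorem quiddity_mul_quiddity_add_one (A : ClosedFrieze n) (i : ℤ) :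
    A.quiddity i * A.quiddity (i + 1) = 1 + A.a i (i + 3) := by
  have h := A.diamond' (i := i) (j := i + 2) (by omega) (by omega)
  have top : A.a (i + 1) (i + 2) = 1 := by rw [← A.topOne (i + 1)]; ring_nf
  rw [show i + 2 + 1 = i + 3 by ring, top] at h
  simp only [quiddity, show i + 1 + 2 = i + 3 by ring]
  linarith

theorem a_add_two_eq_quiddity_mul_sub {A : ClosedFrieze n} (hA : A.Arithmetic) {i j : ℤ}
    (h1 : i ≤ j) (h2 : j ≤ i + n) : A.a i (j + 2) = A.quiddity j * A.a i (j + 1) - A.a i j := by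
  obtain ⟨k, rfl⟩ : ∃ k : ℕ, j = i + k := ⟨(j - i).toNat, by omega⟩
  clear h1
  induction k generalizing i with
  | zero =>
    rw [Nat.cast_zero, add_zero, A.topOne, A.outside i i (by omega)]
    simp [quiddity]
  | succ k ih =>
    have IH := ih (i := i + 1) (by omega)
    rw [show i + 1 + k = i + (k + 1 : ℕ) by push_cast; ring] at IH
    set j : ℤ := i + (k + 1 : ℕ)
    have E1 := A.diamond' (i := i) (j := j + 1) (by omega) (by omega)
    have E2 := A.diamond' (i := i) (j := j) (by omega) (by omega)
    have hne : A.a (i + 1) (j + 1) ≠ 0 := (hA.pos (by omega) (by omega)).ne'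
    apply mul_right_cancel₀ hne
    rw [show j + 1 + 1 = j + 2 by ring] at E1
    linear_combination E2 - E1 + A.a i (j + 1) * IH

theorem Arithmetic.exists_quiddity_eq_one {A : ClosedFrieze n} (hA : A.Arithmetic) :
    ∃ i, A.quiddity i = 1 := by
  by_contra! hne
  have two_le : ∀ i, 2 ≤ A.quiddity i := fun i => by
    obtain ⟨m, hm, he⟩ := hA.exists_nat_eq (i := i) (j := i + 2) (by omega) (by omega)
    have : m ≠ 1 := by rintro rfl; exact hne i (by simpa [quiddity] using he)
    rw [quiddity, he]
    exact_mod_cast (by omega : 2 ≤ m)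
  have grow : ∀ k : ℕ, k ≤ n + 1 → A.a 0 k + 1 ≤ A.a 0 (k + 1) := by
    intro k
    induction k with
    | zero =>
      intro
      simp [A.outside 0 0 (by omega), show A.a 0 1 = 1 by simpa using A.topOne 0]
    | succ k ih =>
      intro hk
      have R := a_add_two_eq_quiddity_mul_sub hA (i := 0) (j := k) (by omega) (by omega)
      have hpos : 0 < A.a 0 (k + 1) := hA.pos (by omega) (by omega)
      push_cast
      rw [add_assoc, one_add_one_eq_two, R]
      nlinarith [two_le k, ih (by omega)]
  have h := grow (n + 1) le_rfl
  have hbot : A.a 0 ((n + 1 : ℕ) + 1) = 1 := by simpa [add_assoc] using A.botOne 0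
  have hpos : 0 < A.a 0 (n + 1 : ℕ) := hA.pos (by omega) (by omega)
  linarith

theorem YEquiv.quiddity_ratio_mul_succ {A B : ClosedFrieze n} (hA : A.Arithmetic)
    (hAB : A.YEquiv B) (i : ℤ) :
    B.quiddity i / A.quiddity i * (B.quiddity (i + 1) / A.quiddity (i + 1)) = 1 := by
  rw [div_mul_div_comm, quiddity_mul_quiddity_add_one, quiddity_mul_quiddity_add_one, ← hAB i,
    ← quiddity_mul_quiddity_add_one]
  exact div_self (mul_pos (hA.quiddity_pos i) (hA.quiddity_pos (i + 1))).ne'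

theorem YEquiv.quiddity_ratio_of_even {A B : ClosedFrieze n} (hA : A.Arithmetic)
    (hAB : A.YEquiv B) {i : ℤ} (hi : Even i) :
    B.quiddity i / A.quiddity i = B.quiddity 0 / A.quiddity 0 :=
  apply_eq_apply_zero_of_even (r := fun i => B.quiddity i / A.quiddity i)
    (hAB.quiddity_ratio_mul_succ hA) hi

theorem YEquiv.quiddity_ratio_of_odd {A B : ClosedFrieze n} (hA : A.Arithmetic)
    (hAB : A.YEquiv B) {i : ℤ} (hi : Odd i) :
    B.quiddity 0 / A.quiddity 0 * (B.quiddity i / A.quiddity i) = 1 :=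
  apply_zero_mul_apply_eq_one_of_odd (r := fun i => B.quiddity i / A.quiddity i)
    (hAB.quiddity_ratio_mul_succ hA) hi

theorem eq_of_quiddity_eq {A B : ClosedFrieze n} (hA : A.Arithmetic) (hB : B.Arithmetic)
    (h : A.quiddity = B.quiddity) : A = B := by
  have diag : ∀ k : ℕ, k ≤ n + 2 → ∀ i : ℤ, A.a i (i + k) = B.a i (i + k) := by
    intro k
    induction k using Nat.twoStepInduction with
    | zero => intro _ i; rw [A.outside _ _ (by omega), B.outside _ _ (by omega)]
    | one => intro _ i; simp [A.topOne, B.topOne]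
    | more k ih0 ih1 =>
      intro hk i
      have RA := a_add_two_eq_quiddity_mul_sub hA (i := i) (j := i + k) (by omega) (by omega)
      have RB := a_add_two_eq_quiddity_mul_sub hB (i := i) (j := i + k) (by omega) (by omega)
      have e1 := ih1 (by omega) i
      push_cast at e1 ⊢
      rw [← add_assoc] at e1 ⊢
      rw [RA, RB, h, e1, ih0 (by omega)]
  apply ext
  funext i j
  by_cases hij : 1 ≤ j - i ∧ j - i ≤ n + 2
  · have h := diag (j - i).toNat (by omega) i
    rwa [show i + ((j - i).toNat : ℤ) = j by omega] at h
  · rw [A.outside _ _ (by omega), B.outside _ _ (by omega)]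

theorem YEquiv.eq_of_quiddity_zero_eq {A B : ClosedFrieze n} (hA : A.Arithmetic)
    (hB : B.Arithmetic) (hAB : A.YEquiv B) (h0 : A.quiddity 0 = B.quiddity 0) : A = B := by
  refine eq_of_quiddity_eq hA hB (funext fun i => ?_)
  have hr : B.quiddity 0 / A.quiddity 0 = 1 := by rw [h0, div_self (hB.quiddity_pos 0).ne']
  have hi : B.quiddity i / A.quiddity i = 1 := by
    rcases Int.even_or_odd i with hi | hi
    · rw [hAB.quiddity_ratio_of_even hA hi, hr]
    · simpa [hr] using hAB.quiddity_ratio_of_odd hA hi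
  exact ((div_eq_one_iff_eq (hA.quiddity_pos i).ne').1 hi).symm

theorem not_quiddity_zero_lt_lt {A B C : ClosedFrieze n} (hA : A.Arithmetic)
    (hB : B.Arithmetic) (hC : C.Arithmetic) (hAB : A.YEquiv B) (hBC : B.YEquiv C) :
    ¬(A.quiddity 0 < B.quiddity 0 ∧ B.quiddity 0 < C.quiddity 0) := by
  rintro ⟨hlt, hlt'⟩
  obtain ⟨i, hi⟩ := hB.exists_quiddity_eq_one
  have hA0 := hA.quiddity_pos 0
  have hB0 := hB.quiddity_pos 0
  rcases Int.even_or_odd i with he | ho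
  · have h := hAB.symm.quiddity_ratio_of_even hB he
    rw [hi, div_one, eq_div_iff hB0.ne'] at h
    nlinarith [hA.one_le_quiddity i]
  · have h := hBC.quiddity_ratio_of_odd hB ho
    rw [hi, div_one, div_mul_eq_mul_div, div_eq_one_iff_eq hB0.ne'] at h
    nlinarith [hC.one_le_quiddity i]

end ClosedFrieze

theorem stmt14_general (n : ℕ) (s : ℤ → ℚ) :
    {A : ClosedFrieze n | A.Arithmetic ∧ ∀ i : ℤ, A.a i (i + 3) = s i}.ncard ≤ 2 := by
  set S := {A : ClosedFrieze n | A.Arithmetic ∧ ∀ i : ℤ, A.a i (i + 3) = s i}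
  have yequiv : ∀ A ∈ S, ∀ B ∈ S, A.YEquiv B := fun A hA B hB i =>
    (hA.2 i).trans (hB.2 i).symm
  have inj : S.InjOn (·.quiddity 0) := fun A hA B hB h0 =>
    (yequiv A hA B hB).eq_of_quiddity_zero_eq hA.1 hB.1 h0
  rw [← inj.ncard_image]
  refine Set.ncard_le_two_of_forall_not_lt_lt ?_
  rintro _ ⟨A, hA, rfl⟩ _ ⟨B, hB, rfl⟩ _ ⟨C, hC, rfl⟩
  exact ClosedFrieze.not_quiddity_zero_lt_lt hA.1 hB.1 hC.1 (yequiv A hA B hB) (yequiv B hB C hC)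

/-- For `n` odd, at most two arithmetic frieze patterns of width `n` share a given
second row: each Y-equivalence class has at most two elements. -/
theorem stmt14 (n : ℕ) (hn : 1 ≤ n) (hodd : Odd n) (s : ℤ → ℚ) :
    {A : ClosedFrieze n | A.Arithmetic ∧ ∀ i : ℤ, A.a i (i + 3) = s i}.ncard ≤ 2 :=
  stmt14_general n s
end

section
/- If a closed Y-frieze pattern of width n has all nonzero rows positive, then no entry equals −1 and vertical knitting from its first row reconstructs the entire pattern; in particular a positive closed Y-frieze pattern of width n is uniquely determined by its first row. -/
/-!
Positivity makes every entry of rows `0, …, n + 1` nonnegative, so no `N` of a diamond is `-1` and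
the diamond rule `W E = (1 + N)(1 + S)` can be solved for `S`. Knitting downwards from the zero row
and the first row thus determines rows `2, …, n + 2`; all other entries are `0` by normalization.
-/

def knit (W E N : ℚ) : ℚ := (W * E - N - 1) / (1 + N)

namespace ClosedYFrieze

variable {n : ℕ}

theorem ext {P Q : ClosedYFrieze n} (h : P.b = Q.b) : P = Q := by
  cases P; cases Q; congr

theorem b_eq_knit (P : ClosedYFrieze n) {i j : ℤ} (h3 : 3 ≤ j - i) (hn : j - i ≤ n + 3)
    (hN : P.b (i + 1) j ≠ -1) :
    P.b i (j + 1) = knit (P.b i j) (P.b (i + 1) (j + 1)) (P.b (i + 1) j) := by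
  have hN' : 1 + P.b (i + 1) j ≠ 0 := fun h => hN (by linarith)
  rw [knit, eq_div_iff hN', P.diamond i j h3 hn]
  ring

theorem rows_eq_of_row_one_eq {P Q : ClosedYFrieze n}
    (hP : ∀ i j : ℤ, 2 ≤ j - i → j - i ≤ (n : ℤ) + 3 → P.b i j ≠ -1)
    (h : ∀ i : ℤ, P.b i (i + 3) = Q.b i (i + 3)) (k : ℕ) (hk : k ≤ n + 1) :
    (∀ i : ℤ, P.b i (i + k + 2) = Q.b i (i + k + 2)) ∧
    (∀ i : ℤ, P.b i (i + k + 3) = Q.b i (i + k + 3)) := by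
  induction k with
  | zero =>
    refine ⟨fun i => ?_, fun i => ?_⟩
    · simpa using (P.topZero i).trans (Q.topZero i).symm
    · simpa using h i
  | succ k ih =>
    obtain ⟨hN, hW⟩ := ih (by omega)
    refine ⟨fun i => by simpa [add_assoc] using hW i, fun i => ?_⟩
    have hNi : P.b (i + 1) (i + k + 3) = Q.b (i + 1) (i + k + 3) := by
      simpa only [show i + 1 + k + 2 = i + k + 3 by ring] using hN (i + 1)
    have hE : P.b (i + 1) (i + k + 3 + 1) = Q.b (i + 1) (i + k + 3 + 1) := by
      simpa only [show i + 1 + k + 3 = i + k + 3 + 1 by ring] using hW (i + 1)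
    have hPN : P.b (i + 1) (i + k + 3) ≠ -1 := hP _ _ (by omega) (by omega)
    rw [show i + ((k + 1 : ℕ) : ℤ) + 3 = i + k + 3 + 1 by push_cast; ring,
      P.b_eq_knit (by omega) (by omega) hPN, Q.b_eq_knit (by omega) (by omega) (hNi ▸ hPN),
      hW i, hE, hNi]

theorem eq_of_row_one_eq {P Q : ClosedYFrieze n}
    (hP : ∀ i j : ℤ, 2 ≤ j - i → j - i ≤ (n : ℤ) + 3 → P.b i j ≠ -1)
    (h : ∀ i : ℤ, P.b i (i + 3) = Q.b i (i + 3)) : P = Q := by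
  refine ext (funext fun i => funext fun j => ?_)
  by_cases hout : j - i ≤ 1 ∨ (n : ℤ) + 5 ≤ j - i
  · rw [P.outside i j hout, Q.outside i j hout]
  obtain ⟨k, rfl⟩ : ∃ k : ℕ, j = i + k + 2 := ⟨(j - i - 2).toNat, by omega⟩
  rcases k with _ | k
  · exact (rows_eq_of_row_one_eq hP h 0 (by omega)).1 i
  · rw [show i + ((k + 1 : ℕ) : ℤ) + 2 = i + k + 3 by push_cast; ring]
    exact (rows_eq_of_row_one_eq hP h k (by omega)).2 i

theorem Positive.nonneg {P : ClosedYFrieze n} (hP : P.Positive) {i j : ℤ} (h2 : 2 ≤ j - i)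
    (hn : j - i ≤ (n : ℤ) + 3) : 0 ≤ P.b i j := by
  obtain ⟨k, rfl⟩ : ∃ k : ℕ, j = i + k + 2 := ⟨(j - i - 2).toNat, by omega⟩
  rcases Nat.eq_zero_or_pos k with rfl | hk0
  · simp [P.topZero]
  rcases Nat.lt_or_ge n k with hkn | hkn
  · rw [show i + k + 2 = i + n + 3 by omega, P.botZero]
  · exact (hP i k hk0 hkn).le

theorem Positive.ne_neg_one {P : ClosedYFrieze n} (hP : P.Positive) {i j : ℤ} (h2 : 2 ≤ j - i)
    (hn : j - i ≤ (n : ℤ) + 3) : P.b i j ≠ -1 := by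
  linarith [hP.nonneg h2 hn]

end ClosedYFrieze

theorem stmt17_general (n : ℕ) (P Q : ClosedYFrieze n) (hP : P.Positive) :
    (∀ i j : ℤ, 2 ≤ j - i → j - i ≤ (n : ℤ) + 3 → P.b i j ≠ -1) ∧
    ((∀ i : ℤ, P.b i (i + 3) = Q.b i (i + 3)) → P = Q) :=
  ⟨fun _ _ => hP.ne_neg_one, ClosedYFrieze.eq_of_row_one_eq fun _ _ => hP.ne_neg_one⟩

/-- A closed Y-frieze pattern of width `n` whose nonzero rows are positive has no
entry equal to `−1` (within the pattern), and is uniquely determined by its first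
row via vertical knitting. -/
theorem stmt17 (n : ℕ) (P Q : ClosedYFrieze n) (hP : P.Positive) (hQ : Q.Positive) :
    (∀ i j : ℤ, 2 ≤ j - i → j - i ≤ (n : ℤ) + 3 → P.b i j ≠ -1) ∧
    ((∀ i : ℤ, P.b i (i + 3) = Q.b i (i + 3)) → P = Q) :=
  stmt17_general n P Q hP
end
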